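/- Let R be an associative unital ℂ-algebra with a derivation D (write r' := D r), let θ ∈ ℂ, and let f, g, x̄ ∈ R with x̄' = 1. Define the 2×2 matrices over R[λ] (λ a central indeterminate): A(λ) = [[2,0],[0,0]]λ² + [[0, −2f²+g−x̄],[−2, 0]]λ + [[−2f²+g, 2f³−fg+f x̄+θ−1],[−2f, 2f²−g+x̄]] and B(λ) = [[1,0],[0,0]]λ + [[0, −f² + (1/2)g − (1/2)x̄],[−1, f]]. Then the zero-curvature equation ∂ₓA − ∂_λB + AB − BA = 0 holds identically in λ if and only if f' = −f² + g − (1/2)x̄ and g' = fg + gf + θ. (This pair is an isomonodromic Lax pair for the fully non-commutative second Painlevé system.) -/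

import Mathlib

/- STATEMENT 4: the Jimbo–Miwa-type pair with non-commutative independent variable x̄
is an isomonodromic Lax pair exactly for the fully non-commutative second Painlevé
system: the zero-curvature equation holds identically in λ iff
f' = −f² + g − (1/2)x̄ and g' = fg + gf + θ. -/

noncomputable section

variable (R : Type*) [Ring R] [Algebra ℂ R]

/-- The λ-dependent matrix `A(λ)` of the fully non-commutative JM pair. -/
def P2ncA (f g xbar : R) (θ : ℂ) (lam : ℂ) : Matrix (Fin 2) (Fin 2) R :=
  (lam ^ 2) • !![(2 : R), 0; 0, 0]
    + lam • !![(0 : R), -2 * f ^ 2 + g - xbar; -2, 0]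
    + !![-2 * f ^ 2 + g, 2 * f ^ 3 - f * g + f * xbar + algebraMap ℂ R θ - 1;
         -2 * f, 2 * f ^ 2 - g + xbar]

/-- The λ-dependent matrix `B(λ)` of the fully non-commutative JM pair. -/
def P2ncB (f g xbar : R) (lam : ℂ) : Matrix (Fin 2) (Fin 2) R :=
  lam • !![(1 : R), 0; 0, 0]
    + !![(0 : R), -f ^ 2 + (1 / 2 : ℂ) • g - (1 / 2 : ℂ) • xbar; -1, f]

theorem P2nc_zero_curvature_iff
    (D : R →ₗ[ℂ] R) (hD : ∀ a b : R, D (a * b) = D a * b + a * D b)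
    (θ : ℂ) (f g xbar : R) (hx : D xbar = 1) :
    (∀ lam : ℂ,
        (P2ncA R f g xbar θ lam).map ⇑D - !![(1 : R), 0; 0, 0]
          + P2ncA R f g xbar θ lam * P2ncB R f g xbar lam
          - P2ncB R f g xbar lam * P2ncA R f g xbar θ lam = 0)
      ↔ (D f = -f ^ 2 + g - (1 / 2 : ℂ) • xbar ∧
          D g = f * g + g * f + algebraMap ℂ R θ) := by
  have h2 : (2 : R) = 1 + 1 := (one_add_one_eq_two).symm
  have hD1 : D (1 : R) = 0 := by
    have h := hD 1 1
    rw [mul_one, one_mul, mul_one] at h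
    exact (right_eq_add.mp h)
  have hD2 : D (2 : R) = 0 := by
    rw [h2, map_add, hD1, add_zero]
  have hDt : D (algebraMap ℂ R θ) = 0 := by
    rw [Algebra.algebraMap_eq_smul_one, map_smul, hD1, smul_zero]
  constructor
  · intro h
    have h10 := Matrix.ext_iff.2 (h 0) 1 0
    simp only [P2ncA, P2ncB, zero_smul, zero_add, zero_pow, Matrix.sub_apply, Matrix.add_apply,
      Matrix.mul_apply, Fin.sum_univ_two, Matrix.map_apply, Matrix.smul_apply,
      Matrix.zero_apply, Matrix.cons_val', Matrix.cons_val_zero, Matrix.cons_val_one,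
      Matrix.head_cons, Matrix.head_fin_const, Matrix.empty_val', Matrix.cons_val_fin_one,
      Matrix.of_apply, pow_succ, pow_zero, one_mul, map_add, map_sub, map_neg, map_zero,
      hD, hD1, hD2, hDt, hx, smul_zero, OfNat.ofNat_ne_zero, ne_eq, not_false_iff] at h10
    have hf : D f = -f ^ 2 + g - (1 / 2 : ℂ) • xbar := by
      have e2 : (2 : ℂ) • ((-f ^ 2 + g - (1 / 2 : ℂ) • xbar) - D f) = 0 := by
        rw [← h10]
        simp only [smul_mul_assoc, mul_smul_comm, smul_smul, mul_add, add_mul, sub_mul,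
          mul_sub, smul_add, smul_sub, neg_mul, mul_neg, smul_neg, mul_assoc, mul_one,
          one_mul, pow_succ, pow_zero, sub_eq_add_neg, neg_add, neg_neg, h2, two_smul,
          zero_mul, mul_zero, neg_zero, zero_smul, smul_zero, add_zero, zero_add, Algebra.commutes]
        module
      have e3 : (-f ^ 2 + g - (1 / 2 : ℂ) • xbar) - D f = 0 := by
        have : (-f ^ 2 + g - (1 / 2 : ℂ) • xbar) - D f
            = (1 / 2 : ℂ) • ((2 : ℂ) • ((-f ^ 2 + g - (1 / 2 : ℂ) • xbar) - D f)) := by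
          module
        rw [this, e2, smul_zero]
      exact (sub_eq_zero.mp e3).symm
    refine ⟨hf, ?_⟩
    have h11 := Matrix.ext_iff.2 (h 0) 1 1
    simp only [P2ncA, P2ncB, zero_smul, zero_add, zero_pow, Matrix.sub_apply, Matrix.add_apply,
      Matrix.mul_apply, Fin.sum_univ_two, Matrix.map_apply, Matrix.smul_apply,
      Matrix.zero_apply, Matrix.cons_val', Matrix.cons_val_zero, Matrix.cons_val_one,
      Matrix.head_cons, Matrix.head_fin_const, Matrix.empty_val', Matrix.cons_val_fin_one,
      Matrix.of_apply, pow_succ, pow_zero, one_mul, map_add, map_sub, map_neg, map_zero,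
      hD, hD1, hD2, hDt, hx, hf, smul_zero, OfNat.ofNat_ne_zero, ne_eq, not_false_iff] at h11
    have e3 : (f * g + g * f + algebraMap ℂ R θ) - D g = 0 := by
      rw [← h11]
      simp only [smul_mul_assoc, mul_smul_comm, smul_smul, mul_add, add_mul, sub_mul,
        mul_sub, smul_add, smul_sub, neg_mul, mul_neg, smul_neg, mul_assoc, mul_one,
        one_mul, pow_succ, pow_zero, sub_eq_add_neg, neg_add, neg_neg, h2, two_smul,
          zero_mul, mul_zero, neg_zero, zero_smul, smul_zero, add_zero, zero_add, Algebra.commutes]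
      module
    exact (sub_eq_zero.mp e3).symm
  · rintro ⟨hf, hg⟩ lam
    ext i j
    fin_cases i <;> fin_cases j <;>
    · simp only [P2ncA, P2ncB, Fin.zero_eta, Fin.mk_one, Fin.isValue, Matrix.sub_apply, Matrix.add_apply,
        Matrix.mul_apply, Fin.sum_univ_two, Matrix.map_apply, Matrix.smul_apply,
        Matrix.zero_apply, Matrix.cons_val', Matrix.cons_val_zero, Matrix.cons_val_one,
        Matrix.head_cons, Matrix.head_fin_const, Matrix.empty_val', Matrix.cons_val_fin_one,
        Matrix.of_apply, pow_succ, pow_zero, one_mul, map_add, map_sub, map_neg, map_zero,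
        map_smul, hD, hD1, hD2, hDt, hx, hf, hg, smul_zero]
      simp only [smul_mul_assoc, mul_smul_comm, smul_smul, mul_add, add_mul, sub_mul,
        mul_sub, smul_add, smul_sub, neg_mul, mul_neg, smul_neg, mul_assoc, mul_one,
        one_mul, pow_succ, pow_zero, sub_eq_add_neg, neg_add, neg_neg, h2, two_smul,
          zero_mul, mul_zero, neg_zero, zero_smul, smul_zero, add_zero, zero_add, Algebra.commutes]
      module
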